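/- arXiv:1809.07716 — 4 statements merged into one kernel-verified Lean document; each statement's English description precedes it below -/
import Mathlib

section
/- Let k > 0, λ ∈ ℂ, and let (x', y') ∈ ℝ² have polar coordinates (ρ', θ'). Then the series ∑_{p∈ℤ} J_p(kρ') e^{ipθ'} (−i w_k(λ))^p converges absolutely and its sum equals exp(−s_k(λ) y' − iλ x'). -/
open MeasureTheory

/-- The branch of the complex square root with `θ ∈ [−π, π)`: it agrees with the
principal square root except on the negative real axis, where `sqrtP (−r) = −i √r`. -/
noncomputable def sqrtP (z : ℂ) : ℂ :=
  if z.im = 0 ∧ z.re < 0 then -(z ^ (1/2 : ℂ)) else z ^ (1/2 : ℂ)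

/-- `s_k(λ) = sqrtP (λ² − k²)`. -/
noncomputable def sK (k : ℝ) (l : ℂ) : ℂ := sqrtP (l ^ 2 - (k : ℂ) ^ 2)

/-- `w_k(λ) = (λ − s_k(λ))/k`. -/
noncomputable def wK (k : ℝ) (l : ℂ) : ℂ := (l - sK k l) / (k : ℂ)

/-- Bessel function of the first kind of nonnegative integer order `p`. -/
noncomputable def besselJnat (p : ℕ) (z : ℂ) : ℂ :=
  ∑' n : ℕ, ((-1 : ℂ) ^ n / ((n.factorial : ℂ) * ((n + p).factorial : ℂ))) * (z / 2) ^ (2 * n + p)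

/-- Bessel function of the first kind of integer order `p`. -/
noncomputable def besselJ (p : ℤ) (z : ℂ) : ℂ :=
  if 0 ≤ p then besselJnat p.toNat z else (-1 : ℂ) ^ p.natAbs * besselJnat p.natAbs z

/-!
This is the generating function of the Bessel functions,
`exp (z/2 · (t - t⁻¹)) = ∑ₚ Jₚ(z) tᵖ`, at `z = kρ'` and `t = -i e^{iθ'} w_k(λ)`.
Since `s_k(λ)² = λ² - k²`, one has `k w = λ - s` and `k / w = λ + s`, and with these the exponent
`z/2 · (t - t⁻¹)` becomes `-s y' - iλ x'`. The generating function itself is the Cauchy product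
`exp (zt/2) · exp (-z/(2t))`, regrouped along the diagonals `m - n = p`; absolute convergence of
the double series justifies the regrouping and gives absolute convergence of the series over `p`.
-/

open Complex

lemma sqrtP_sq (z : ℂ) : sqrtP z ^ 2 = z := by
  have h : (z ^ (1/2 : ℂ)) ^ 2 = z := by
    rcases eq_or_ne z 0 with rfl | hz
    · rw [zero_cpow (by norm_num : (1/2 : ℂ) ≠ 0)]; ring
    · rw [sq, ← cpow_add _ _ hz]; norm_num
  unfold sqrtP
  split
  · rw [neg_sq, h]
  · exact h

lemma sK_sq (k : ℝ) (lam : ℂ) : sK k lam ^ 2 = lam ^ 2 - (k : ℂ) ^ 2 := sqrtP_sq _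

open Nat in
lemma hasSum_besselJnat (q : ℕ) (z : ℂ) :
    HasSum (fun n : ℕ => (-1 : ℂ) ^ n / ((n ! : ℂ) * ((n + q)! : ℂ)) * (z / 2) ^ (2 * n + q))
      (besselJnat q z) := by
  refine Summable.hasSum (Summable.of_norm_bounded
    ((Real.summable_pow_div_factorial (‖z / 2‖ ^ 2)).mul_left (‖z / 2‖ ^ q)) fun n => ?_)
  have hfac : (1 : ℝ) ≤ (n + q)! := by exact_mod_cast (n + q).factorial_pos
  rw [norm_mul, norm_div, norm_mul, norm_pow, norm_pow, norm_neg, norm_one, one_pow,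
    Complex.norm_natCast, Complex.norm_natCast, ← pow_mul, pow_add, mul_comm 2 n]
  calc 1 / ((n ! : ℝ) * (n + q)!) * (‖z / 2‖ ^ (n * 2) * ‖z / 2‖ ^ q)
      ≤ 1 / (n ! : ℝ) * (‖z / 2‖ ^ (n * 2) * ‖z / 2‖ ^ q) := by
        gcongr; exact le_mul_of_one_le_right (by positivity) hfac
    _ = ‖z / 2‖ ^ q * (‖z / 2‖ ^ (n * 2) / n !) := by ring

lemma besselJ_natCast (q : ℕ) (z : ℂ) : besselJ q z = besselJnat q z := by
  simp [besselJ]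

lemma besselJ_neg_natCast (q : ℕ) (z : ℂ) : besselJ (-q) z = (-1) ^ q * besselJnat q z := by
  rcases q.eq_zero_or_pos with rfl | hq
  · simp [besselJ]
  · simp [besselJ, hq.ne']

/-- `(p, n) ↦ (n + p⁺, n + p⁻)`, whose fibre over `p` is the set of pairs `(m, n)` with
`m - n = p`. -/
def intProdNatEquiv : ℤ × ℕ ≃ ℕ × ℕ where
  toFun pn := (pn.2 + pn.1.toNat, pn.2 + (-pn.1).toNat)
  invFun mn := ((mn.1 : ℤ) - (mn.2 : ℤ), min mn.1 mn.2)
  left_inv := by rintro ⟨p, n⟩; ext <;> simp; omega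
  right_inv := by rintro ⟨m, n⟩; ext <;> simp <;> omega

lemma intProdNatEquiv_natCast (q n : ℕ) : intProdNatEquiv (q, n) = (n + q, n) := by
  simp [intProdNatEquiv]

lemma intProdNatEquiv_neg_natCast (q n : ℕ) : intProdNatEquiv (-q, n) = (n, n + q) := by
  simp [intProdNatEquiv]

open Nat in
noncomputable def expMulExpTerm (a b : ℂ) (mn : ℕ × ℕ) : ℂ :=
  a ^ mn.1 / mn.1 ! * (b ^ mn.2 / mn.2 !)

lemma expMulExpTerm_swap (a b : ℂ) (mn : ℕ × ℕ) :
    expMulExpTerm a b mn.swap = expMulExpTerm b a mn := by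
  simp only [expMulExpTerm, Prod.fst_swap, Prod.snd_swap, mul_comm]

lemma summable_norm_expMulExpTerm (a b : ℂ) : Summable fun mn => ‖expMulExpTerm a b mn‖ := by
  have h (c : ℂ) : Summable fun n : ℕ => ‖c ^ n / (n.factorial : ℂ)‖ :=
    (Real.summable_pow_div_factorial ‖c‖).congr fun n => by simp [norm_pow]
  exact ((h a).mul_norm (h b) :)

lemma hasSum_expMulExpTerm (a b : ℂ) : HasSum (expMulExpTerm a b) (exp a * exp b) := by
  have h (c : ℂ) : HasSum (fun n : ℕ => c ^ n / (n.factorial : ℂ)) (exp c) := by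
    rw [exp_eq_exp_ℂ]; exact NormedSpace.expSeries_div_hasSum_exp c
  exact ((h a).mul (h b) (summable_norm_expMulExpTerm a b).of_norm :)

section Generating

variable {t : ℂ} (z : ℂ)

open Nat in
lemma hasSum_expMulExpTerm_diagonal (ht : t ≠ 0) (q : ℕ) :
    HasSum (fun n => expMulExpTerm (z * t / 2) (-z / (2 * t)) (n + q, n))
      (besselJnat q z * t ^ q) := by
  refine ((hasSum_besselJnat q z).mul_right (t ^ q)).congr_fun fun n => ?_
  have : (n ! : ℂ) ≠ 0 := by exact_mod_cast n.factorial_ne_zero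
  have : ((n + q)! : ℂ) ≠ 0 := by exact_mod_cast (n + q).factorial_ne_zero
  rw [expMulExpTerm, neg_div, neg_eq_neg_one_mul]
  simp only [div_pow, mul_pow]
  field_simp
  ring

lemma hasSum_expMulExpTerm_fiber (ht : t ≠ 0) (p : ℤ) :
    HasSum (fun n => expMulExpTerm (z * t / 2) (-z / (2 * t)) (intProdNatEquiv (p, n)))
      (besselJ p z * t ^ p) := by
  obtain ⟨q, rfl | rfl⟩ := p.eq_nat_or_neg
  · simpa [intProdNatEquiv_natCast, besselJ_natCast] using hasSum_expMulExpTerm_diagonal z ht q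
  · -- the fibre over `-q` is the fibre over `q` for `-t⁻¹`, with the two factors swapped
    have h := hasSum_expMulExpTerm_diagonal z (neg_ne_zero.2 (inv_ne_zero ht)) q
    rw [show z * -t⁻¹ / 2 = -z / (2 * t) by field_simp,
      show -z / (2 * -t⁻¹) = z * t / 2 by field_simp] at h
    rw [besselJ_neg_natCast, zpow_neg, zpow_natCast,
      show (-1) ^ q * besselJnat q z * (t ^ q)⁻¹ = besselJnat q z * (-t⁻¹) ^ q by
        rw [neg_pow t⁻¹, inv_pow]; ring]
    refine h.congr_fun fun n => ?_
    rw [intProdNatEquiv_neg_natCast, ← expMulExpTerm_swap]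
    rfl

theorem hasSum_besselJ_mul_zpow (ht : t ≠ 0) :
    HasSum (fun p : ℤ => besselJ p z * t ^ p) (exp (z / 2 * (t - t⁻¹))) := by
  have h := (intProdNatEquiv.hasSum_iff.2 (hasSum_expMulExpTerm _ _)).prod_fiberwise
    (hasSum_expMulExpTerm_fiber z ht)
  rwa [← exp_add, show z * t / 2 + -z / (2 * t) = z / 2 * (t - t⁻¹) by ring] at h

theorem summable_norm_besselJ_mul_zpow (ht : t ≠ 0) :
    Summable fun p : ℤ => ‖besselJ p z * t ^ p‖ := by
  have h := intProdNatEquiv.summable_iff.2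
    (summable_norm_expMulExpTerm (z * t / 2) (-z / (2 * t)))
  refine h.prod.of_nonneg_of_le (fun _ => norm_nonneg _) fun p => ?_
  rw [← (hasSum_expMulExpTerm_fiber z ht p).tsum_eq]
  exact norm_tsum_le_tsum_norm (h.prod_factor p)

end Generating

section PlaneWave

variable {k : ℝ} (lam : ℂ)

lemma ofReal_mul_wK (hk : k ≠ 0) : (k : ℂ) * wK k lam = lam - sK k lam := by
  rw [wK, mul_div_cancel₀ _ (by exact_mod_cast hk)]

lemma wK_mul_add_sK (hk : k ≠ 0) : wK k lam * (lam + sK k lam) = k := by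
  have hk' : (k : ℂ) ≠ 0 := by exact_mod_cast hk
  refine mul_left_cancel₀ hk' ?_
  linear_combination (lam + sK k lam) * ofReal_mul_wK lam hk - sK_sq k lam

lemma wK_ne_zero (hk : k ≠ 0) : wK k lam ≠ 0 :=
  left_ne_zero_of_mul (by rw [wK_mul_add_sK lam hk]; exact_mod_cast hk)

lemma ofReal_mul_inv_wK (hk : k ≠ 0) : (k : ℂ) * (wK k lam)⁻¹ = lam + sK k lam := by
  rw [← wK_mul_add_sK lam hk, mul_comm, inv_mul_cancel_left₀ (wK_ne_zero lam hk)]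

lemma generatingExponent_eq (hk : k ≠ 0) (ρ θ : ℝ) :
    ((k * ρ : ℝ) : ℂ) / 2 *
        (exp (I * θ) * (-I * wK k lam) - (exp (I * θ) * (-I * wK k lam))⁻¹) =
      -sK k lam * ((ρ * Real.sin θ : ℝ) : ℂ) - I * lam * ((ρ * Real.cos θ : ℝ) : ℂ) := by
  have hinv : (exp (I * θ) * (-I * wK k lam))⁻¹ = exp (-(I * θ)) * (I * (wK k lam)⁻¹) := by
    simp only [mul_inv, exp_neg, inv_neg, inv_I]; ring
  have he : exp (I * θ) = cos θ + sin θ * I := by rw [mul_comm, exp_mul_I]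
  have he' : exp (-(I * θ)) = cos θ - sin θ * I := by
    rw [← mul_neg, mul_comm, exp_mul_I, cos_neg, sin_neg]; ring
  rw [hinv, he, he']
  push_cast
  linear_combination (-I * ρ / 2 * (cos θ + sin θ * I)) * ofReal_mul_wK lam hk
    + (-I * ρ / 2 * (cos θ - sin θ * I)) * ofReal_mul_inv_wK lam hk
    + (ρ * sin θ * sK k lam) * I_sq

end PlaneWave

theorem besselType_pointwise_expansion_general (k : ℝ) (hk : 0 < k) (lam : ℂ)
    (x' y' ρ' θ' : ℝ)
    (hx' : x' = ρ' * Real.cos θ') (hy' : y' = ρ' * Real.sin θ') :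
    Summable (fun p : ℤ =>
      ‖besselJ p ((k * ρ' : ℝ) : ℂ) * Complex.exp (Complex.I * (p : ℂ) * (θ' : ℂ)) *
        (-Complex.I * wK k lam) ^ p‖) ∧
    HasSum (fun p : ℤ =>
      besselJ p ((k * ρ' : ℝ) : ℂ) * Complex.exp (Complex.I * (p : ℂ) * (θ' : ℂ)) *
        (-Complex.I * wK k lam) ^ p)
      (Complex.exp (-(sK k lam) * (y' : ℂ) - Complex.I * lam * (x' : ℂ))) := by
  have ht : exp (I * θ') * (-I * wK k lam) ≠ 0 :=
    mul_ne_zero (exp_ne_zero _) (mul_ne_zero (neg_ne_zero.2 I_ne_zero) (wK_ne_zero lam hk.ne'))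
  have hterm (p : ℤ) : exp (I * p * θ') * (-I * wK k lam) ^ p =
      (exp (I * θ') * (-I * wK k lam)) ^ p := by
    rw [mul_zpow (exp _), ← exp_int_mul, ← mul_assoc, mul_comm (p : ℂ) I]
  simp_rw [mul_assoc (besselJ _ _), hterm, hx', hy',
    ← generatingExponent_eq lam hk.ne' ρ' θ']
  exact ⟨summable_norm_besselJ_mul_zpow _ ht, hasSum_besselJ_mul_zpow _ ht⟩

/-- For `k > 0`, `λ ∈ ℂ` and `(x', y')` with polar coordinates `(ρ', θ')`, the series
`∑_{p∈ℤ} J_p(kρ') e^{ipθ'} (−i w_k(λ))^p` converges absolutely with sum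
`exp(−s_k(λ) y' − iλ x')`. -/
theorem besselType_pointwise_expansion (k : ℝ) (hk : 0 < k) (lam : ℂ)
    (x' y' ρ' θ' : ℝ) (hρ' : 0 ≤ ρ')
    (hx' : x' = ρ' * Real.cos θ') (hy' : y' = ρ' * Real.sin θ') :
    Summable (fun p : ℤ =>
      ‖besselJ p ((k * ρ' : ℝ) : ℂ) * Complex.exp (Complex.I * (p : ℂ) * (θ' : ℂ)) *
        (-Complex.I * wK k lam) ^ p‖) ∧
    HasSum (fun p : ℤ =>
      besselJ p ((k * ρ' : ℝ) : ℂ) * Complex.exp (Complex.I * (p : ℂ) * (θ' : ℂ)) *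
        (-Complex.I * wK k lam) ^ p)
      (Complex.exp (-(sK k lam) * (y' : ℂ) - Complex.I * lam * (x' : ℂ))) :=
  besselType_pointwise_expansion_general k hk lam x' y' ρ' θ' hx' hy'
end

section
/- Let k' ≥ k > 0, ρ > 0, C > 0, and let K be a nonnegative integer. Let f : [k', ∞) → ℂ be measurable with |f(λ)| ≤ C λ^K for λ ∈ [k', ∞). For p ∈ ℤ define E_p^+ = ∫_{k'}^{∞} e^{−√(λ² − k²) ρ} (−i w_k(λ))^p f(λ) dλ. Then for every integer p with |p| ≥ (kρ)²/4 + 1 − K one has |E_p^+| ≤ ∫_{k'}^{∞} e^{−√(λ² − k²) ρ} |w_k(λ)^p| |f(λ)| dλ ≤ 3C (|p| + K)! (2/ρ)^{K+1} (kρ/2)^{−|p|}. -/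
/-!
Put `v = w_k(λ)⁻¹ ≥ 1`, `a = kρ/2` and `x = a v`. Then `√(λ² − k²) = k (v − v⁻¹) / 2` and
`λ ≤ k v`, so the integrand is at most `C (2/ρ)^K a^{−|p|} e^{−x} e^{a²/x} x^M` with `M = |p| + K`.
When `M ≥ a² + 1` the factor `e^{a²/x}` is absorbed by a shift: `e^{a²/x} x^M ≤ (x + 3/2)^M` for
`x ≥ a`. As `dx/dλ ≥ ρ`, the substitution `t = x + 3/2` bounds the integral by
`C (2/ρ)^K a^{−|p|} e^{3/2} / ρ` times `∫₀^∞ e^{−t} t^M dt = M!`, and `e^{3/2} ≤ 6`.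
-/

open MeasureTheory

/-- For real `λ`, `w_k(λ) = (λ − √(λ² − k²))/k` with the nonnegative real square root. -/
noncomputable def wkr (k l : ℝ) : ℝ := (l - Real.sqrt (l ^ 2 - k ^ 2)) / k

open Set Real

noncomputable def wkrInv (k l : ℝ) : ℝ := (l + √(l ^ 2 - k ^ 2)) / k

section wkr

variable {k l : ℝ}

lemma sqrt_sq_sub_sq_lt (hk : k ≠ 0) (hl : 0 < l) : √(l ^ 2 - k ^ 2) < l := by
  rw [sqrt_lt' hl]
  linarith [pow_pos (abs_pos.2 hk) 2, sq_abs k]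

lemma wkr_pos (hk : 0 < k) (hkl : k ≤ l) : 0 < wkr k l :=
  div_pos (sub_pos.2 (sqrt_sq_sub_sq_lt hk.ne' (hk.trans_le hkl))) hk

lemma wkr_mul_wkrInv (hk : k ≠ 0) (hkl : k ^ 2 ≤ l ^ 2) : wkr k l * wkrInv k l = 1 := by
  have hs : √(l ^ 2 - k ^ 2) ^ 2 = l ^ 2 - k ^ 2 := sq_sqrt (sub_nonneg.2 hkl)
  rw [wkr, wkrInv, div_mul_div_comm, div_eq_one_iff_eq (mul_ne_zero hk hk)]
  linear_combination -hs

lemma one_le_wkrInv (hk : 0 < k) (hkl : k ≤ l) : 1 ≤ wkrInv k l := by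
  rw [wkrInv, one_le_div hk]
  linarith [sqrt_nonneg (l ^ 2 - k ^ 2)]

lemma le_mul_wkrInv (hk : k ≠ 0) : l ≤ k * wkrInv k l := by
  rw [wkrInv, mul_div_cancel₀ _ hk]
  linarith [sqrt_nonneg (l ^ 2 - k ^ 2)]

lemma sqrt_sq_sub_sq_eq (hk : k ≠ 0) : √(l ^ 2 - k ^ 2) = k / 2 * (wkrInv k l - wkr k l) := by
  rw [wkr, wkrInv]
  field_simp
  ring

lemma abs_wkr_zpow_le (hk : 0 < k) (hkl : k ≤ l) (p : ℤ) :
    |wkr k l ^ p| ≤ wkrInv k l ^ p.natAbs := by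
  have hw := wkr_pos hk hkl
  have hwv : wkrInv k l = (wkr k l)⁻¹ :=
    (eq_inv_of_mul_eq_one_right (wkr_mul_wkrInv hk.ne' (pow_le_pow_left₀ hk.le hkl 2)))
  have hw1 : wkr k l ≤ 1 := by
    rw [← inv_le_inv₀ zero_lt_one hw, ← hwv, inv_one]
    exact one_le_wkrInv hk hkl
  rw [abs_of_pos (zpow_pos hw p), hwv, inv_pow, ← zpow_natCast, ← zpow_neg]
  exact zpow_le_zpow_right_of_le_one₀ hw hw1 (by omega)

lemma hasDerivAt_wkrInv (hk : 0 < k) (hkl : k < l) :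
    HasDerivAt (wkrInv k) ((1 + l / √(l ^ 2 - k ^ 2)) / k) l := by
  have hpos : 0 < l ^ 2 - k ^ 2 := by nlinarith
  have hsq : HasDerivAt (fun y : ℝ => y ^ 2 - k ^ 2) (2 * l) l := by
    simpa using (hasDerivAt_pow 2 l).sub_const (k ^ 2)
  have hsqrt := (hasDerivAt_sqrt hpos.ne').comp l hsq
  refine (((hasDerivAt_id l).add hsqrt).div_const k).congr_deriv ?_
  have := (sqrt_pos.2 hpos).ne'
  field_simp

lemma two_div_le_deriv_wkrInv (hk : 0 < k) (hkl : k < l) : 2 / k ≤ deriv (wkrInv k) l := by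
  have hl : 0 < l := hk.trans hkl
  have hs := sqrt_sq_sub_sq_lt hk.ne' hl
  rw [(hasDerivAt_wkrInv hk hkl).deriv]
  gcongr
  linarith [(one_le_div (sqrt_pos.2 (by nlinarith))).2 hs.le]

lemma strictMonoOn_wkrInv (hk : 0 < k) : StrictMonoOn (wkrInv k) (Ici 0) := by
  intro x hx y _ hxy
  have : √(x ^ 2 - k ^ 2) ≤ √(y ^ 2 - k ^ 2) := by gcongr
  exact div_lt_div_of_pos_right (add_lt_add_of_lt_of_le hxy this) hk

end wkr

lemma integrableOn_exp_neg_mul_pow (M : ℕ) :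
    IntegrableOn (fun t : ℝ => exp (-t) * t ^ M) (Ioi 0) := by
  refine (GammaIntegral_convergent (s := M + 1) (by positivity)).congr_fun (fun t _ => ?_)
    measurableSet_Ioi
  simp [← rpow_natCast]

lemma setIntegral_exp_neg_mul_pow_le_factorial {s : Set ℝ} (hs : s ⊆ Ioi 0) (M : ℕ) :
    ∫ t in s, exp (-t) * t ^ M ≤ M.factorial := by
  calc ∫ t in s, exp (-t) * t ^ M ≤ ∫ t in Ioi 0, exp (-t) * t ^ M :=
        setIntegral_mono_set (integrableOn_exp_neg_mul_pow M)
          ((ae_restrict_iff' measurableSet_Ioi).2 (.of_forall fun t (ht : 0 < t) => by positivity))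
          (.of_forall hs)
    _ = M.factorial := by
        rw [← Gamma_nat_eq_factorial, Gamma_eq_integral (by positivity)]
        refine setIntegral_congr_fun measurableSet_Ioi fun t _ => ?_
        simp [← rpow_natCast]

lemma integrableOn_and_integral_deriv_wkrInv_mul_exp_neg_mul_pow_le {k k' a b : ℝ} (hk : 0 < k)
    (hkk' : k ≤ k') (ha : 0 < a) (hb : 0 ≤ b) (M : ℕ) :
    IntegrableOn (fun l => a * deriv (wkrInv k) l *
        (exp (-(a * wkrInv k l + b)) * (a * wkrInv k l + b) ^ M)) (Ioi k') ∧
      ∫ l in Ioi k', a * deriv (wkrInv k) l *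
        (exp (-(a * wkrInv k l + b)) * (a * wkrInv k l + b) ^ M) ≤ M.factorial := by
  set u : ℝ → ℝ := fun l => a * wkrInv k l + b
  have hderiv : ∀ l ∈ Ioi k', HasDerivWithinAt u (a * deriv (wkrInv k) l) (Ioi k') l :=
    fun l hl => ((((hasDerivAt_wkrInv hk (hkk'.trans_lt hl)).const_mul a).add_const b).congr_deriv
      (by rw [(hasDerivAt_wkrInv hk (hkk'.trans_lt hl)).deriv])).hasDerivWithinAt
  have hnonneg : Ioi k' ⊆ Ici 0 := fun l (hl : k' < l) => (hk.trans_le hkk').le.trans hl.le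
  have hinj : InjOn u (Ioi k') := fun x hx y hy hxy =>
    (strictMonoOn_wkrInv hk).injOn (hnonneg hx) (hnonneg hy) (by simpa [u, ha.ne'] using hxy)
  have hpos : u '' Ioi k' ⊆ Ioi 0 := by
    rintro _ ⟨l, hl, rfl⟩
    have := one_le_wkrInv hk (hkk'.trans hl.le)
    exact add_pos_of_pos_of_nonneg (by positivity) hb
  have habs : EqOn (fun l => |a * deriv (wkrInv k) l| • (exp (-u l) * u l ^ M))
      (fun l => a * deriv (wkrInv k) l * (exp (-u l) * u l ^ M)) (Ioi k') := fun l hl => by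
    have := two_div_le_deriv_wkrInv hk (hkk'.trans_lt hl)
    dsimp only
    rw [smul_eq_mul, abs_of_pos (mul_pos ha ((div_pos two_pos hk).trans_le this))]
  constructor
  · refine ((integrableOn_image_iff_integrableOn_abs_deriv_smul measurableSet_Ioi hderiv hinj
      _).1 ((integrableOn_exp_neg_mul_pow M).mono_set hpos)).congr_fun habs measurableSet_Ioi
  · rw [← setIntegral_congr_fun measurableSet_Ioi habs,
      ← integral_image_eq_integral_abs_deriv_smul measurableSet_Ioi hderiv hinj
      fun t => exp (-t) * t ^ M]
    exact setIntegral_exp_neg_mul_pow_le_factorial hpos M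

lemma exp_mul_div_add_mul_pow_le {x c : ℝ} (hx : 0 < x) (hc : 0 ≤ c) (M : ℕ) :
    exp (M * (c / (x + c))) * x ^ M ≤ (x + c) ^ M := by
  have hxc : 0 < x + c := by linarith
  have hlog : c / (x + c) ≤ log ((x + c) / x) := by
    have := one_sub_inv_le_log_of_pos (div_pos hxc hx)
    rwa [inv_div, one_sub_div hxc.ne', add_sub_cancel_left] at this
  have hexp : exp (c / (x + c)) ≤ (x + c) / x :=
    (exp_le_exp.2 hlog).trans_eq (exp_log (div_pos hxc hx))
  calc exp (M * (c / (x + c))) * x ^ M = exp (c / (x + c)) ^ M * x ^ M := by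
        rw [← exp_nat_mul]
    _ ≤ ((x + c) / x) ^ M * x ^ M := by gcongr
    _ = (x + c) ^ M := by rw [div_pow, div_mul_cancel₀ _ (pow_ne_zero _ hx.ne')]

lemma exp_sq_div_mul_pow_le {a x : ℝ} {M : ℕ} (ha : 0 < a) (hx : a ≤ x)
    (hM : a ^ 2 + 1 ≤ M) : exp (a ^ 2 / x) * x ^ M ≤ (x + 3 / 2) ^ M := by
  have hx0 : 0 < x := ha.trans_le hx
  -- for `x ≥ a` the comparison of exponents reduces to `a² − 3a + 3 ≥ 0`
  refine le_trans ?_ (exp_mul_div_add_mul_pow_le hx0 (by norm_num) M)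
  gcongr
  rw [mul_div_assoc', div_le_div_iff₀ hx0 (by linarith)]
  nlinarith [sq_nonneg (a - 3 / 2), mul_le_mul_of_nonneg_left hx (by positivity : 0 ≤ a ^ 2 + 3)]

lemma exp_neg_sqrt_mul_abs_wkr_zpow_mul_pow_le {k l ρ : ℝ} {K : ℕ} (hk : 0 < k) (hkl : k ≤ l)
    (hρ : 0 < ρ) (p : ℤ) (hp : (k * ρ) ^ 2 / 4 + 1 - K ≤ p.natAbs) :
    exp (-√(l ^ 2 - k ^ 2) * ρ) * |wkr k l ^ p| * l ^ K ≤
      (2 / ρ) ^ K * exp (3 / 2) / (k * ρ / 2) ^ p.natAbs *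
        (exp (-(k * ρ / 2 * wkrInv k l + 3 / 2)) *
          (k * ρ / 2 * wkrInv k l + 3 / 2) ^ (p.natAbs + K)) := by
  set a := k * ρ / 2 with ha_def
  set n := p.natAbs
  have ha : 0 < a := by positivity
  have hv : 1 ≤ wkrInv k l := one_le_wkrInv hk hkl
  have hexp : exp (-√(l ^ 2 - k ^ 2) * ρ) =
      exp (a ^ 2 / (a * wkrInv k l)) * exp (-(a * wkrInv k l)) := by
    have hwv : wkr k l = (wkrInv k l)⁻¹ :=
      eq_inv_of_mul_eq_one_left (wkr_mul_wkrInv hk.ne' (pow_le_pow_left₀ hk.le hkl 2))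
    have : wkrInv k l ≠ 0 := by positivity
    rw [← exp_add, sqrt_sq_sub_sq_eq hk.ne', hwv, ha_def]
    congr 1
    field_simp
    ring
  have hM : a ^ 2 + 1 ≤ ((n + K : ℕ) : ℝ) := by
    push_cast
    linarith [show a ^ 2 = (k * ρ) ^ 2 / 4 by ring]
  have hwp : |wkr k l ^ p| ≤ wkrInv k l ^ n := abs_wkr_zpow_le hk hkl p
  have hl : l ≤ k * wkrInv k l := le_mul_wkrInv hk.ne'
  have hl0 : 0 ≤ l := (hk.trans_le hkl).le
  calc exp (-√(l ^ 2 - k ^ 2) * ρ) * |wkr k l ^ p| * l ^ K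
      ≤ exp (-√(l ^ 2 - k ^ 2) * ρ) * wkrInv k l ^ n * (k * wkrInv k l) ^ K := by gcongr
    _ = (2 / ρ) ^ K / a ^ n * exp (-(a * wkrInv k l)) *
          (exp (a ^ 2 / (a * wkrInv k l)) * (a * wkrInv k l) ^ (n + K)) := by
        rw [hexp, show 2 / ρ = k / a by rw [ha_def]; field_simp]
        simp only [div_pow, mul_pow, pow_add]
        field_simp
    _ ≤ (2 / ρ) ^ K / a ^ n * exp (-(a * wkrInv k l)) * (a * wkrInv k l + 3 / 2) ^ (n + K) := by
        gcongr
        exact exp_sq_div_mul_pow_le ha (le_mul_of_one_le_right ha.le hv) hM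
    _ = (2 / ρ) ^ K * exp (3 / 2) / a ^ n *
          (exp (-(a * wkrInv k l + 3 / 2)) * (a * wkrInv k l + 3 / 2) ^ (n + K)) := by
        rw [neg_add, exp_add, exp_neg (3 / 2)]
        field_simp

lemma exp_neg_sqrt_mul_abs_wkr_zpow_mul_pow_le_deriv {k l ρ : ℝ} {K : ℕ} (hk : 0 < k)
    (hkl : k < l) (hρ : 0 < ρ) (p : ℤ) (hp : (k * ρ) ^ 2 / 4 + 1 - K ≤ p.natAbs) :
    exp (-√(l ^ 2 - k ^ 2) * ρ) * |wkr k l ^ p| * l ^ K ≤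
      (2 / ρ) ^ (K + 1) * exp (3 / 2) / 2 / (k * ρ / 2) ^ p.natAbs *
        (k * ρ / 2 * deriv (wkrInv k) l * (exp (-(k * ρ / 2 * wkrInv k l + 3 / 2)) *
          (k * ρ / 2 * wkrInv k l + 3 / 2) ^ (p.natAbs + K))) := by
  have hρ_le : ρ ≤ k * ρ / 2 * deriv (wkrInv k) l :=
    calc ρ = k * ρ / 2 * (2 / k) := by field_simp
      _ ≤ _ := by gcongr; exact two_div_le_deriv_wkrInv hk hkl
  have hv := one_le_wkrInv hk hkl.le
  refine (exp_neg_sqrt_mul_abs_wkr_zpow_mul_pow_le hk hkl.le hρ p hp).trans ?_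
  set g :=
    exp (-(k * ρ / 2 * wkrInv k l + 3 / 2)) * (k * ρ / 2 * wkrInv k l + 3 / 2) ^ (p.natAbs + K)
  have hg : 0 ≤ g := by positivity
  calc (2 / ρ) ^ K * exp (3 / 2) / (k * ρ / 2) ^ p.natAbs * g
      ≤ (2 / ρ) ^ K * exp (3 / 2) / (k * ρ / 2) ^ p.natAbs *
          (k * ρ / 2 * deriv (wkrInv k) l * g / ρ) := by
        gcongr
        rw [le_div_iff₀ hρ, mul_comm]
        exact mul_le_mul_of_nonneg_right hρ_le hg
    _ = _ := by
        rw [pow_succ]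
        field_simp

lemma exp_three_halves_le_six : exp (3 / 2) ≤ 6 := by
  have h : exp (3 / 2) ^ 2 = exp 1 ^ 3 := by rw [← exp_nat_mul, ← exp_nat_mul]; norm_num
  have h27 : exp 1 ^ 3 < 3 ^ 3 := pow_lt_pow_left₀ exp_one_lt_three (exp_pos 1).le (by norm_num)
  nlinarith [exp_pos (3 / 2)]

theorem Ep_plus_bound_general (k k' ρ C : ℝ) (K : ℕ) (hk : 0 < k) (hkk' : k ≤ k')
    (hρ : 0 < ρ) (hC : 0 < C)
    (f : ℝ → ℂ)
    (hfb : ∀ l : ℝ, k' ≤ l → ‖f l‖ ≤ C * l ^ K)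
    (p : ℤ) (hp : (k * ρ) ^ 2 / 4 + 1 - (K : ℝ) ≤ (p.natAbs : ℝ)) :
    ‖∫ l in Set.Ioi k',
        (Real.exp (-Real.sqrt (l ^ 2 - k ^ 2) * ρ) : ℂ) *
          (-Complex.I * (wkr k l : ℂ)) ^ p * f l‖ ≤
      (∫ l in Set.Ioi k',
        Real.exp (-Real.sqrt (l ^ 2 - k ^ 2) * ρ) * |wkr k l ^ p| * ‖f l‖) ∧
    (∫ l in Set.Ioi k',
        Real.exp (-Real.sqrt (l ^ 2 - k ^ 2) * ρ) * |wkr k l ^ p| * ‖f l‖) ≤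
      3 * C * ((p.natAbs + K).factorial : ℝ) * (2 / ρ) ^ (K + 1) *
        (k * ρ / 2) ^ (-(p.natAbs : ℤ)) := by
  set a := k * ρ / 2
  set M := p.natAbs + K
  set φ := fun l ↦
    a * deriv (wkrInv k) l * (exp (-(a * wkrInv k l + 3 / 2)) * (a * wkrInv k l + 3 / 2) ^ M)
  set D := C * ((2 / ρ) ^ (K + 1) * exp (3 / 2) / 2 / a ^ p.natAbs)
  obtain ⟨hφ, hφ_le⟩ :=
    integrableOn_and_integral_deriv_wkrInv_mul_exp_neg_mul_pow_le hk hkk' (by positivity : 0 < a)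
      (by norm_num : (0 : ℝ) ≤ 3 / 2) M
  have hmajor (l : ℝ) (hl : k' < l) :
      exp (-√(l ^ 2 - k ^ 2) * ρ) * |wkr k l ^ p| * ‖f l‖ ≤ D * φ l :=
    calc exp (-√(l ^ 2 - k ^ 2) * ρ) * |wkr k l ^ p| * ‖f l‖
        ≤ C * (exp (-√(l ^ 2 - k ^ 2) * ρ) * |wkr k l ^ p| * l ^ K) := by
          rw [mul_left_comm]
          gcongr
          exact hfb l hl.le
      _ ≤ D * φ l := (mul_le_mul_of_nonneg_left
          (exp_neg_sqrt_mul_abs_wkr_zpow_mul_pow_le_deriv hk (hkk'.trans_lt hl) hρ p hp)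
          hC.le).trans_eq (mul_assoc _ _ _).symm
  refine ⟨(norm_integral_le_integral_norm _).trans_eq (integral_congr_ae (.of_forall fun l ↦ ?_)),
    ?_⟩
  · simp only [norm_mul, norm_zpow, norm_neg, Complex.norm_I, one_mul, Complex.norm_real,
      Real.norm_eq_abs, abs_exp, abs_zpow]
  calc ∫ l in Ioi k', exp (-√(l ^ 2 - k ^ 2) * ρ) * |wkr k l ^ p| * ‖f l‖
      ≤ ∫ l in Ioi k', D * φ l :=
        integral_mono_of_nonneg (.of_forall fun l ↦ by positivity) (hφ.const_mul D)
          ((ae_restrict_iff' measurableSet_Ioi).2 (.of_forall hmajor))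
    _ = D * ∫ l in Ioi k', φ l := integral_const_mul D _
    _ ≤ D * M.factorial := by gcongr
    _ ≤ 3 * C * M.factorial * (2 / ρ) ^ (K + 1) * a ^ (-(p.natAbs : ℤ)) := by
        rw [zpow_neg, zpow_natCast, ← div_eq_mul_inv]
        calc D * M.factorial
            = C * M.factorial * (2 / ρ) ^ (K + 1) / a ^ p.natAbs * (exp (3 / 2) / 2) := by ring
          _ ≤ C * M.factorial * (2 / ρ) ^ (K + 1) / a ^ p.natAbs * 3 := by
            gcongr
            linarith [exp_three_halves_le_six]
          _ = _ := by ring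

/-- Bound on `E_p^+ = ∫_{k'}^{∞} e^{−√(λ²−k²)ρ} (−i w_k(λ))^p f(λ) dλ`: for
`|p| ≥ (kρ)²/4 + 1 − K`,
`|E_p^+| ≤ ∫_{k'}^∞ e^{−√(λ²−k²)ρ}|w_k(λ)^p||f(λ)|dλ ≤ 3C(|p|+K)!(2/ρ)^{K+1}(kρ/2)^{−|p|}`. -/
theorem Ep_plus_bound (k k' ρ C : ℝ) (K : ℕ) (hk : 0 < k) (hkk' : k ≤ k')
    (hρ : 0 < ρ) (hC : 0 < C)
    (f : ℝ → ℂ) (hf : Measurable f)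
    (hfb : ∀ l : ℝ, k' ≤ l → ‖f l‖ ≤ C * l ^ K)
    (p : ℤ) (hp : (k * ρ) ^ 2 / 4 + 1 - (K : ℝ) ≤ (p.natAbs : ℝ)) :
    ‖∫ l in Set.Ioi k',
        (Real.exp (-Real.sqrt (l ^ 2 - k ^ 2) * ρ) : ℂ) *
          (-Complex.I * (wkr k l : ℂ)) ^ p * f l‖ ≤
      (∫ l in Set.Ioi k',
        Real.exp (-Real.sqrt (l ^ 2 - k ^ 2) * ρ) * |wkr k l ^ p| * ‖f l‖) ∧
    (∫ l in Set.Ioi k',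
        Real.exp (-Real.sqrt (l ^ 2 - k ^ 2) * ρ) * |wkr k l ^ p| * ‖f l‖) ≤
      3 * C * ((p.natAbs + K).factorial : ℝ) * (2 / ρ) ^ (K + 1) *
        (k * ρ / 2) ^ (-(p.natAbs : ℤ)) :=
  Ep_plus_bound_general k k' ρ C K hk hkk' hρ hC f hfb p hp
end

section
/- Let a > 0 be real and let M be an integer with M ≥ a² + 1. Then ∫_{1}^{∞} e^{a(−v + v^{−1})} v^M dv ≤ 3 · M! · a^{−M−1}. -/
open MeasureTheory

section Aux

open Real Set

/-- Integrability of `exp (-(a t)) t^n` on `(0, ∞)`. -/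
lemma integrableOn_exp_neg_mul_pow_s8 (a : ℝ) (ha : 0 < a) (n : ℕ) :
    IntegrableOn (fun t : ℝ => Real.exp (-(a * t)) * t ^ n) (Set.Ioi 0) := by
  have h : IntegrableOn (fun x : ℝ => Real.exp (-x) * x ^ ((n : ℝ) + 1 - 1)) (Set.Ioi 0) :=
    Real.GammaIntegral_convergent (by positivity)
  have h2 : IntegrableOn (fun x : ℝ => Real.exp (-(a * x)) * (a * x) ^ ((n : ℝ) + 1 - 1))
      (Set.Ioi 0) := by
    have := (integrableOn_Ioi_comp_mul_left_iff
      (fun x : ℝ => Real.exp (-x) * x ^ ((n : ℝ) + 1 - 1)) 0 ha).2 (by simpa using h)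
    simpa using this
  have heq : ∀ x ∈ Set.Ioi (0 : ℝ),
      Real.exp (-(a * x)) * (a * x) ^ ((n : ℝ) + 1 - 1)
        = a ^ n * (Real.exp (-(a * x)) * x ^ n) := by
    intro x _
    rw [show (n : ℝ) + 1 - 1 = ((n : ℕ) : ℝ) by ring, Real.rpow_natCast, mul_pow]
    ring
  have h3 : IntegrableOn (fun x : ℝ => a ^ n * (Real.exp (-(a * x)) * x ^ n)) (Set.Ioi 0) :=
    (h2.congr_fun heq measurableSet_Ioi)
  have := h3.integrable.const_mul (a ^ n)⁻¹
  refine (IntegrableOn.congr_fun (this : IntegrableOn _ _ _) (fun x _ => ?_) measurableSet_Ioi)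
  field_simp

/-- The Gamma-type integral `∫_0^∞ exp (-(a t)) t^n dt = n! / a^(n+1)`. -/
lemma integral_exp_neg_mul_pow (a : ℝ) (ha : 0 < a) (n : ℕ) :
    ∫ t in Set.Ioi (0 : ℝ), Real.exp (-(a * t)) * t ^ n
      = (n.factorial : ℝ) / a ^ (n + 1) := by
  have h := Real.integral_rpow_mul_exp_neg_mul_Ioi (a := (n : ℝ) + 1) (r := a)
    (by positivity) ha
  have heq : ∫ t in Set.Ioi (0 : ℝ), Real.exp (-(a * t)) * t ^ n
      = ∫ t in Set.Ioi (0 : ℝ), t ^ ((n : ℝ) + 1 - 1) * Real.exp (-(a * t)) := by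
    refine setIntegral_congr_fun measurableSet_Ioi (fun t _ => ?_)
    rw [show (n : ℝ) + 1 - 1 = ((n : ℕ) : ℝ) by ring, Real.rpow_natCast]
    ring
  rw [heq, h, Real.Gamma_nat_eq_factorial]
  rw [show ((n : ℝ) + 1) = ((n + 1 : ℕ) : ℝ) by push_cast; ring, Real.rpow_natCast]
  rw [div_pow, one_pow]
  field_simp

set_option maxHeartbeats 1000000 in
/-- The key arithmetic estimate: `a (e^{a/m} - 1) ≤ 13/12` when `a² + 1 ≤ m`. -/
lemma ac_bound (a m : ℝ) (ha : 0 < a) (hm : a ^ 2 + 1 ≤ m) :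
    a * (Real.exp (a / m) - 1) ≤ 13 / 12 := by
  have hm0 : (0:ℝ) < m := by nlinarith
  set t : ℝ := a / m with ht_def
  have ht0 : 0 < t := div_pos ha hm0
  have ht1 : t ≤ 1 := by rw [ht_def, div_le_one hm0]; nlinarith
  have hb := Real.exp_bound' ht0.le ht1 (n := 3) (by norm_num)
  norm_num [Finset.sum_range_succ, Nat.factorial] at hb
  have hc_le : Real.exp t - 1 ≤ t + t ^ 2 / 2 + 2 / 9 * t ^ 3 := by nlinarith [hb]
  have h1 : a * (Real.exp t - 1) ≤ a * (t + t ^ 2 / 2 + 2 / 9 * t ^ 3) :=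
    mul_le_mul_of_nonneg_left hc_le ha.le
  have h2 : a * (t + t ^ 2 / 2 + 2 / 9 * t ^ 3)
      = (36 * a ^ 2 * m ^ 2 + 18 * a ^ 3 * m + 8 * a ^ 4) / (36 * m ^ 3) := by
    rw [ht_def]; field_simp; ring
  rw [h2] at h1
  refine h1.trans ?_
  rw [div_le_iff₀ (by positivity)]
  have hm1 : a ^ 2 ≤ m - 1 := by linarith
  have h6a : 6 * a ≤ a ^ 2 + 9 := by nlinarith [sq_nonneg (a - 3)]
  have hA : 36 * a ^ 2 * m ^ 2 ≤ 36 * (m - 1) * m ^ 2 := by nlinarith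
  have hB : 18 * a ^ 3 * m ≤ 3 * m * (m - 1) * (m + 8) := by
    have hb1 : 6 * a ^ 3 ≤ (a ^ 2 + 9) * a ^ 2 := by nlinarith
    have hb2 : (a ^ 2 + 9) * a ^ 2 ≤ (m + 8) * (m - 1) := by nlinarith
    nlinarith
  have hC : 8 * a ^ 4 ≤ 8 * (m - 1) ^ 2 := by nlinarith
  have hm2 : (1 : ℝ) ≤ m := by nlinarith
  nlinarith

/-- Numerical bound `e^{13/12} ≤ 3`. -/
lemma exp_thirteen_twelfths_le_three : Real.exp (13 / 12 : ℝ) ≤ 3 := by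
  have h2 : Real.exp (13 / 12 : ℝ) = Real.exp 1 * Real.exp (1 / 12) := by
    rw [← Real.exp_add]; norm_num
  have h4 : (11 : ℝ) / 12 ≤ Real.exp (-(1 / 12)) := by
    have := Real.add_one_le_exp (-(1 / 12) : ℝ)
    linarith
  have h3 : Real.exp (1 / 12 : ℝ) ≤ 12 / 11 := by
    have h5 : Real.exp ((1 : ℝ) / 12) = (Real.exp (-(1 / 12)))⁻¹ := by
      rw [← Real.exp_neg]; norm_num
    rw [h5, inv_le_comm₀ (Real.exp_pos _) (by norm_num)]
    linarith
  have h6 : Real.exp 1 < 2.7182818286 := Real.exp_one_lt_d9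
  calc Real.exp (13 / 12 : ℝ) = Real.exp 1 * Real.exp (1 / 12) := h2
    _ ≤ 2.7182818286 * (12 / 11) := by
        apply mul_le_mul h6.le h3 (Real.exp_pos _).le (by norm_num)
    _ ≤ 3 := by norm_num

end Aux

set_option maxHeartbeats 1000000 in
/-- For real `a > 0` and an integer `M ≥ a² + 1`,
`∫_{1}^{∞} e^{a(−v + v⁻¹)} v^M dv ≤ 3 · M! · a^{−M−1}`. -/
theorem integral_exp_vM_bound (a : ℝ) (ha : 0 < a) (M : ℕ) (hM : a ^ 2 + 1 ≤ (M : ℝ)) :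
    (∫ v in Set.Ioi (1 : ℝ), Real.exp (a * (-v + v⁻¹)) * v ^ M) ≤
      3 * (M.factorial : ℝ) * a ^ (-(M : ℤ) - 1) := by
  have hMR : (0 : ℝ) < M := by nlinarith
  set t : ℝ := a / M with ht_def
  have ht0 : 0 < t := div_pos ha hMR
  set c : ℝ := Real.exp t - 1 with hc_def
  have hc0 : 0 ≤ c := by
    rw [hc_def]
    have := Real.one_le_exp ht0.le
    linarith
  -- Step 1: a * c ≤ 13/12
  have hac : a * c ≤ 13 / 12 := ac_bound a M ha hM
  -- Step 2: exp (a * c) ≤ 3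
  have hexp3 : Real.exp (a * c) ≤ 3 :=
    (Real.exp_le_exp.2 hac).trans exp_thirteen_twelfths_le_three
  -- Step 3: pointwise bound
  set g : ℝ → ℝ := fun x => Real.exp (-(a * x)) * x ^ M with hg_def
  have hpt : ∀ v ∈ Set.Ioi (1 : ℝ),
      Real.exp (a * (-v + v⁻¹)) * v ^ M ≤ Real.exp (a * c) * g (v + c) := by
    intro v hv
    have hv1 : 1 < v := hv
    have hv0 : 0 < v := lt_trans one_pos hv1
    have hinv0 : 0 ≤ v⁻¹ := inv_nonneg.2 hv0.le
    have hinv1 : v⁻¹ ≤ 1 := inv_le_one_of_one_le₀ hv1.le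
    -- convexity: exp (t * v⁻¹) ≤ 1 + c * v⁻¹
    have hconv : Real.exp (t * v⁻¹) ≤ 1 + c * v⁻¹ := by
      have := convexOn_exp.2 (Set.mem_univ (0 : ℝ)) (Set.mem_univ t)
        (by linarith : (0:ℝ) ≤ 1 - v⁻¹) hinv0 (by ring)
      simp only [smul_eq_mul, mul_zero, zero_add, Real.exp_zero, mul_one] at this
      rw [hc_def]
      calc Real.exp (t * v⁻¹) = Real.exp (v⁻¹ * t) := by rw [mul_comm]
        _ ≤ (1 - v⁻¹) * 1 + v⁻¹ * Real.exp t := by simpa using this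
        _ = 1 + (Real.exp t - 1) * v⁻¹ := by ring
    -- power up
    have hpow : Real.exp (a * v⁻¹) ≤ (1 + c * v⁻¹) ^ M := by
      have hrw : a * v⁻¹ = (M : ℝ) * (t * v⁻¹) := by
        rw [ht_def]; field_simp
      rw [hrw, Real.exp_nat_mul]
      exact pow_le_pow_left₀ (Real.exp_nonneg _) hconv M
    have hsplit : Real.exp (a * (-v + v⁻¹)) = Real.exp (-(a * v)) * Real.exp (a * v⁻¹) := by
      rw [← Real.exp_add]; ring_nf
    have hcomb : (1 + c * v⁻¹) ^ M * v ^ M = (v + c) ^ M := by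
      rw [← mul_pow]
      congr 1
      field_simp
    have hgval : g (v + c) = Real.exp (-(a * (v + c))) * (v + c) ^ M := rfl
    rw [hsplit, hgval]
    have hexps : Real.exp (a * c) * (Real.exp (-(a * (v + c))) * (v + c) ^ M)
        = Real.exp (-(a * v)) * (v + c) ^ M := by
      rw [← mul_assoc, ← Real.exp_add]
      ring_nf
    rw [hexps]
    calc Real.exp (-(a * v)) * Real.exp (a * v⁻¹) * v ^ M
        ≤ Real.exp (-(a * v)) * ((1 + c * v⁻¹) ^ M) * v ^ M := by
          apply mul_le_mul_of_nonneg_right _ (by positivity)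
          exact mul_le_mul_of_nonneg_left hpow (Real.exp_nonneg _)
      _ = Real.exp (-(a * v)) * ((1 + c * v⁻¹) ^ M * v ^ M) := by ring
      _ = Real.exp (-(a * v)) * (v + c) ^ M := by rw [hcomb]
  -- Step 4: integrability
  have hgInt : IntegrableOn g (Set.Ioi 0) := integrableOn_exp_neg_mul_pow_s8 a ha M
  have hpre : (fun x : ℝ => x + c) ⁻¹' Set.Ioi (1 + c) = Set.Ioi 1 := by
    ext x; simp
  have hmp : MeasurePreserving (fun x : ℝ => x + c) volume volume :=
    measurePreserving_add_right volume c
  have hemb : MeasurableEmbedding (fun x : ℝ => x + c) := measurableEmbedding_addRight c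
  have hgsub : IntegrableOn g (Set.Ioi (1 + c)) :=
    hgInt.mono_set (Set.Ioi_subset_Ioi (by linarith))
  have hshift : IntegrableOn (fun v : ℝ => g (v + c)) (Set.Ioi 1) := by
    have := (hmp.integrableOn_comp_preimage hemb (f := g) (s := Set.Ioi (1 + c))).2 hgsub
    rwa [hpre] at this
  have hshift' : IntegrableOn (fun v : ℝ => Real.exp (a * c) * g (v + c)) (Set.Ioi 1) :=
    hshift.integrable.const_mul _
  have hfInt : IntegrableOn (fun v : ℝ => Real.exp (a * (-v + v⁻¹)) * v ^ M) (Set.Ioi 1) := by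
    apply Integrable.mono' hshift'.integrable
    · apply ContinuousOn.aestronglyMeasurable _ measurableSet_Ioi
      apply ContinuousOn.mul
      · apply Real.continuous_exp.comp_continuousOn
        apply ContinuousOn.mul continuousOn_const
        apply ContinuousOn.add (continuousOn_id.neg)
        exact ContinuousOn.inv₀ continuousOn_id (fun x hx => by
          have h1x : (1:ℝ) < x := hx
          have : (0:ℝ) < x := lt_trans one_pos h1x
          exact this.ne')
      · exact (continuous_pow M).continuousOn
    · rw [ae_restrict_iff' measurableSet_Ioi]
      refine Filter.Eventually.of_forall (fun v hv => ?_)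
      have h1 := hpt v hv
      have hv0 : (0:ℝ) < v := lt_trans one_pos hv
      have hnn : 0 ≤ Real.exp (a * (-v + v⁻¹)) * v ^ M := by positivity
      rw [Real.norm_eq_abs, abs_of_nonneg hnn]
      exact h1
  -- Step 5: chain of integral inequalities
  have step1 : (∫ v in Set.Ioi (1 : ℝ), Real.exp (a * (-v + v⁻¹)) * v ^ M)
      ≤ ∫ v in Set.Ioi (1 : ℝ), Real.exp (a * c) * g (v + c) :=
    setIntegral_mono_on hfInt hshift' measurableSet_Ioi hpt
  have step2 : (∫ v in Set.Ioi (1 : ℝ), Real.exp (a * c) * g (v + c))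
      = Real.exp (a * c) * ∫ v in Set.Ioi (1 : ℝ), g (v + c) := integral_const_mul _ _
  have step3 : (∫ v in Set.Ioi (1 : ℝ), g (v + c)) = ∫ x in Set.Ioi (1 + c), g x := by
    have := hmp.setIntegral_preimage_emb hemb g (Set.Ioi (1 + c))
    rwa [hpre] at this
  have hgnn : 0 ≤ᵐ[volume.restrict (Set.Ioi (0:ℝ))] g := by
    rw [Filter.EventuallyLE, ae_restrict_iff' measurableSet_Ioi]
    refine Filter.Eventually.of_forall (fun x hx => ?_)
    have hx0 : (0:ℝ) < x := hx
    simp only [hg_def, Pi.zero_apply]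
    positivity
  have step4 : (∫ x in Set.Ioi (1 + c), g x) ≤ ∫ x in Set.Ioi (0 : ℝ), g x := by
    apply setIntegral_mono_set hgInt hgnn
    exact HasSubset.Subset.eventuallyLE (Set.Ioi_subset_Ioi (by linarith))
  have step5 : (∫ x in Set.Ioi (0 : ℝ), g x) = (M.factorial : ℝ) / a ^ (M + 1) :=
    integral_exp_neg_mul_pow a ha M
  have hfinal : (∫ v in Set.Ioi (1 : ℝ), Real.exp (a * (-v + v⁻¹)) * v ^ M)
      ≤ Real.exp (a * c) * ((M.factorial : ℝ) / a ^ (M + 1)) := by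
    calc (∫ v in Set.Ioi (1 : ℝ), Real.exp (a * (-v + v⁻¹)) * v ^ M)
        ≤ Real.exp (a * c) * ∫ v in Set.Ioi (1 : ℝ), g (v + c) := by rw [← step2]; exact step1
      _ ≤ Real.exp (a * c) * ((M.factorial : ℝ) / a ^ (M + 1)) := by
          apply mul_le_mul_of_nonneg_left _ (Real.exp_nonneg _)
          rw [step3, ← step5]
          exact step4
  refine hfinal.trans ?_
  have hz : a ^ (-(M : ℤ) - 1) = (a ^ (M + 1))⁻¹ := by
    rw [show -(M : ℤ) - 1 = -((M + 1 : ℕ) : ℤ) by push_cast; ring, zpow_neg, zpow_natCast]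
  rw [hz]
  have hr : 3 * (M.factorial : ℝ) * (a ^ (M + 1))⁻¹
      = 3 * ((M.factorial : ℝ) / a ^ (M + 1)) := by ring
  rw [hr]
  apply mul_le_mul_of_nonneg_right hexp3 (by positivity)
end

section
/- Let k > 0 and β ∈ (0, π/2). Define φ(z) = z cos β + i · sqrtP(z² − k²) · sin β, γ⁻ = { w cos β − i√(w² − k²) sin β : w ∈ (k, ∞) }, and D⁻ = { z + t : z ∈ γ⁻, t ∈ (0, ∞) }. Then for every z ∈ D⁻ one has Re φ(z) > 0 and Im φ(z) > 0. -/
open MeasureTheory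

/-- The Cagniard–de Hoop mapping `φ(z) = z cos β + i sqrtP(z² − k²) sin β`. -/
noncomputable def phiCdH (k β : ℝ) (z : ℂ) : ℂ :=
  z * (Real.cos β : ℂ) + Complex.I * sqrtP (z ^ 2 - (k : ℂ) ^ 2) * (Real.sin β : ℂ)

/-- `γ⁺ = { w cos β + i√(w²−k²) sin β : w ∈ (k, ∞) }`. -/
def gammaPlus (k β : ℝ) : Set ℂ :=
  {z | ∃ w : ℝ, k < w ∧
    z = (w * Real.cos β : ℝ) + Complex.I * (Real.sqrt (w ^ 2 - k ^ 2) * Real.sin β : ℝ)}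

/-- `γ⁻ = { w cos β − i√(w²−k²) sin β : w ∈ (k, ∞) }`. -/
def gammaMinus (k β : ℝ) : Set ℂ :=
  {z | ∃ w : ℝ, k < w ∧
    z = (w * Real.cos β : ℝ) - Complex.I * (Real.sqrt (w ^ 2 - k ^ 2) * Real.sin β : ℝ)}

/-- `D⁻ = { z + t : z ∈ γ⁻, t ∈ (0, ∞) }`. -/
def DMinus (k β : ℝ) : Set ℂ :=
  {ζ | ∃ z ∈ gammaMinus k β, ∃ t : ℝ, 0 < t ∧ ζ = z + (t : ℂ)}

/-- Signs of the principal square root of a point in the lower half plane. -/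
lemma cpow_half_signs {ζ : ℂ} (h : ζ.im < 0) :
    0 < (ζ ^ (1/2 : ℂ)).re ∧ (ζ ^ (1/2 : ℂ)).im < 0 := by
  have hζ : ζ ≠ 0 := by
    intro h0; rw [h0] at h; simp at h
  rw [Complex.cpow_def_of_ne_zero hζ]
  have harg : Complex.arg ζ < 0 := Complex.arg_neg_iff.2 h
  have harg2 : -Real.pi < Complex.arg ζ := Complex.neg_pi_lt_arg ζ
  have hpi : 0 < Real.pi := Real.pi_pos
  have him : (Complex.log ζ * (1/2 : ℂ)).im = Complex.arg ζ / 2 := by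
    simp [Complex.mul_im, Complex.log_im]
    ring
  constructor
  · rw [Complex.exp_re, him]
    apply mul_pos (Real.exp_pos _)
    apply Real.cos_pos_of_mem_Ioo
    constructor <;> [linarith; linarith]
  · rw [Complex.exp_im, him]
    have hs : Real.sin (Complex.arg ζ / 2) < 0 :=
      Real.sin_neg_of_neg_of_neg_pi_lt (by linarith) (by linarith)
    have he := Real.exp_pos (Complex.log ζ * (1/2 : ℂ)).re
    nlinarith

/-- For `k > 0`, `β ∈ (0, π/2)` and every `z ∈ D⁻`, `Re φ(z) > 0` and `Im φ(z) > 0`. -/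
theorem phiCdH_mem_first_quadrant (k β : ℝ) (hk : 0 < k)
    (hβ : β ∈ Set.Ioo 0 (Real.pi / 2)) :
    ∀ z ∈ DMinus k β, 0 < (phiCdH k β z).re ∧ 0 < (phiCdH k β z).im := by
  obtain ⟨hβ0, hβ2⟩ := hβ
  have hsin : 0 < Real.sin β := Real.sin_pos_of_pos_of_lt_pi hβ0 (by linarith [Real.pi_pos])
  have hcos : 0 < Real.cos β := Real.cos_pos_of_mem_Ioo ⟨by linarith [Real.pi_pos], hβ2⟩
  rintro z ⟨z0, ⟨w, hw, rfl⟩, t, ht, rfl⟩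
  set q : ℝ := Real.sqrt (w ^ 2 - k ^ 2) with hqdef
  have hq2 : q ^ 2 = w ^ 2 - k ^ 2 := Real.sq_sqrt (by nlinarith)
  have hqpos : 0 < q := Real.sqrt_pos.2 (by nlinarith)
  set Z : ℂ := (w * Real.cos β : ℝ) - Complex.I * (q * Real.sin β : ℝ) + (t : ℂ) with hZdef
  set x : ℝ := w * Real.cos β + t with hxdef
  set y : ℝ := -(q * Real.sin β) with hydef
  have hxre : Z.re = x := by
    rw [hZdef, hxdef]
    simp only [Complex.add_re, Complex.sub_re, Complex.mul_re, Complex.I_re, Complex.I_im,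
      Complex.ofReal_re, Complex.ofReal_im]
    ring
  have hxim : Z.im = y := by
    rw [hZdef, hydef]
    simp only [Complex.add_im, Complex.sub_im, Complex.mul_im, Complex.I_re, Complex.I_im,
      Complex.ofReal_re, Complex.ofReal_im]
    ring
  have hy_neg : y < 0 := by rw [hydef]; nlinarith
  have hx_pos : w * Real.cos β < x := by rw [hxdef]; linarith
  have hwc : 0 < w * Real.cos β := mul_pos (lt_trans hk hw) hcos
  have hx0 : 0 < x := by linarith
  set ζ : ℂ := Z ^ 2 - (k : ℂ) ^ 2 with hζdef
  have hζre : ζ.re = x ^ 2 - y ^ 2 - k ^ 2 := by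
    rw [hζdef, pow_two, pow_two]
    simp only [Complex.sub_re, Complex.mul_re, Complex.ofReal_re, Complex.ofReal_im, hxre, hxim]
    ring
  have hζim : ζ.im = 2 * x * y := by
    rw [hζdef, pow_two, pow_two]
    simp only [Complex.sub_im, Complex.mul_im, Complex.ofReal_re, Complex.ofReal_im, hxre, hxim]
    ring
  have hζim_neg : ζ.im < 0 := by rw [hζim]; nlinarith
  have hsqrtP : sqrtP ζ = ζ ^ (1/2 : ℂ) := by
    rw [sqrtP, if_neg]
    rintro ⟨h1, -⟩
    exact absurd h1 (ne_of_lt hζim_neg)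
  obtain ⟨hure, huim⟩ := cpow_half_signs hζim_neg
  set s : ℂ := ζ ^ (1/2 : ℂ) with hsdef
  have hs2 : s ^ 2 = ζ := by
    rw [hsdef, show (1/2 : ℂ) = ((2 : ℕ) : ℂ)⁻¹ by norm_num]
    exact Complex.cpow_nat_inv_pow ζ two_ne_zero
  set u : ℝ := s.re with hudef
  set v : ℝ := s.im with hvdef
  have hF1 : u ^ 2 - v ^ 2 = x ^ 2 - y ^ 2 - k ^ 2 := by
    have h := congrArg Complex.re hs2
    rw [pow_two, Complex.mul_re, hζre] at h
    linear_combination h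
  have hF2 : u * v = x * y := by
    have h := congrArg Complex.im hs2
    rw [pow_two, Complex.mul_im, hζim] at h
    linear_combination h / 2
  have hre : (phiCdH k β Z).re = x * Real.cos β - v * Real.sin β := by
    rw [phiCdH, ← hζdef, hsqrtP]
    simp only [Complex.add_re, Complex.mul_re, Complex.mul_im, Complex.I_re, Complex.I_im,
      Complex.ofReal_re, Complex.ofReal_im, hxre, hxim]
    ring
  have him : (phiCdH k β Z).im = y * Real.cos β + u * Real.sin β := by
    rw [phiCdH, ← hζdef, hsqrtP]
    simp only [Complex.add_im, Complex.mul_re, Complex.mul_im, Complex.I_re, Complex.I_im,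
      Complex.ofReal_re, Complex.ofReal_im, hxre, hxim]
    ring
  clear_value Z ζ s u v x y q
  constructor
  · rw [hre]
    linarith [mul_pos hx0 hcos, mul_pos (neg_pos.2 huim) hsin]
  · rw [him]
    have hkey : q * Real.cos β < u := by
      by_contra hcon
      push_neg at hcon
      set c : ℝ := q * Real.cos β with hcdef
      have hc0 : 0 < c := mul_pos hqpos hcos
      have hU : u ^ 2 * (u ^ 2 - (x ^ 2 - y ^ 2 - k ^ 2)) = x ^ 2 * y ^ 2 := by
        linear_combination u ^ 2 * hF1 + (u * v + x * y) * hF2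
      have hxy2 : 0 < x ^ 2 * y ^ 2 :=
        mul_pos (pow_pos hx0 2) (pow_two_pos_of_ne_zero hy_neg.ne)
      have hu2 : 0 < u ^ 2 := pow_pos hure 2
      have hUA : x ^ 2 - y ^ 2 - k ^ 2 < u ^ 2 := by
        by_contra hno
        push_neg at hno
        have h2 : u ^ 2 * (u ^ 2 - (x ^ 2 - y ^ 2 - k ^ 2)) ≤ 0 :=
          mul_nonpos_of_nonneg_of_nonpos hu2.le (by linarith)
        rw [hU] at h2
        linarith
      have hc2 : u ^ 2 ≤ c ^ 2 := pow_le_pow_left₀ hure.le hcon 2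
      have hA : 0 < c ^ 2 + u ^ 2 - (x ^ 2 - y ^ 2 - k ^ 2) := by linarith [sq_nonneg c]
      have hge : 0 ≤ (c ^ 2 - u ^ 2) * (c ^ 2 + u ^ 2 - (x ^ 2 - y ^ 2 - k ^ 2)) :=
        mul_nonneg (by linarith) hA.le
      have hfc : c ^ 2 * c ^ 2 - (x ^ 2 - y ^ 2 - k ^ 2) * c ^ 2 - x ^ 2 * y ^ 2 =
          (c ^ 2 - u ^ 2) * (c ^ 2 + u ^ 2 - (x ^ 2 - y ^ 2 - k ^ 2)) := by
        linear_combination hU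
      have hy2 : y ^ 2 = q ^ 2 * Real.sin β ^ 2 := by rw [hydef]; ring
      have hpyth : Real.sin β ^ 2 + Real.cos β ^ 2 = 1 := Real.sin_sq_add_cos_sq β
      have hfval : c ^ 2 * c ^ 2 - (x ^ 2 - y ^ 2 - k ^ 2) * c ^ 2 - x ^ 2 * y ^ 2 =
          q ^ 2 * (w ^ 2 * Real.cos β ^ 2 - x ^ 2) := by
        rw [hcdef, hy2]
        linear_combination (q ^ 2 * q ^ 2 * Real.cos β ^ 2 - x ^ 2 * q ^ 2) * hpyth +
          (q ^ 2 * Real.cos β ^ 2) * hq2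
      have hcontr : 0 ≤ q ^ 2 * (w ^ 2 * Real.cos β ^ 2 - x ^ 2) := by
        rw [← hfval, hfc]; exact hge
      have hxx : 0 < x ^ 2 - w ^ 2 * Real.cos β ^ 2 := by
        have hid : x ^ 2 - w ^ 2 * Real.cos β ^ 2 =
            (x - w * Real.cos β) * (x + w * Real.cos β) := by ring
        rw [hid]
        exact mul_pos (sub_pos.2 hx_pos) (by linarith)
      have h2 : 0 < q ^ 2 * (x ^ 2 - w ^ 2 * Real.cos β ^ 2) := mul_pos (pow_pos hqpos 2) hxx
      have hid2 : q ^ 2 * (w ^ 2 * Real.cos β ^ 2 - x ^ 2) =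
          -(q ^ 2 * (x ^ 2 - w ^ 2 * Real.cos β ^ 2)) := by ring
      rw [hid2] at hcontr
      linarith
    have hfin := mul_pos hsin (sub_pos.2 hkey)
    rw [hydef]
    linarith [hfin]
end
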